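/- For every natural number n ≥ 1, the (n-1)-th iterate of the Syracuse map applied to the Mersenne number 2^n - 1 equals 2·3^{n-1} - 1. -/
import Mathlib


/-- The Syracuse map: next odd number in the Collatz orbit. -/
def syr (n : ℕ) : ℕ := (3 * n + 1) / 2 ^ padicValNat 2 (3 * n + 1)

lemma syr_step (j k : ℕ) : syr (3 ^ j * 2 ^ (k + 2) - 1) = 3 ^ (j + 1) * 2 ^ (k + 1) - 1 := by
  set a := 3 ^ (j + 1) * 2 ^ (k + 1) with ha
  set b := 3 ^ j * 2 ^ (k + 2) with hb
  have h3b : 3 * b = 2 * a := by rw [ha, hb]; ring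
  have hb1 : 1 ≤ b := Nat.one_le_iff_ne_zero.mpr (by positivity)
  have ha1 : 1 ≤ a := Nat.one_le_iff_ne_zero.mpr (by positivity)
  have key : 3 * (b - 1) + 1 = 2 * (a - 1) := by omega
  have haodd : Odd (a - 1) := by
    have : 2 ∣ a := ⟨3 ^ (j + 1) * 2 ^ k, by rw [ha]; ring⟩
    rcases this with ⟨c, hc⟩
    exact ⟨c - 1, by omega⟩
  have hv : padicValNat 2 (3 * (b - 1) + 1) = 1 := by
    rw [key]
    rw [padicValNat.mul (by norm_num) (by omega)]
    rw [padicValNat.self (by norm_num),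
      padicValNat.eq_zero_of_not_dvd (by simpa [Nat.odd_iff, Nat.two_dvd_ne_zero] using haodd)]
  rw [syr, hv, key]
  omega

lemma syr_aux (i : ℕ) : ∀ j, syr^[i] (3 ^ j * 2 ^ (i + 1) - 1) = 3 ^ (j + i) * 2 - 1 := by
  induction i with
  | zero => intro j; simp
  | succ i ih =>
    intro j
    rw [Function.iterate_succ_apply, syr_step, ih (j + 1)]
    ring_nf

theorem stmt_6 (n : ℕ) (hn : 1 ≤ n) :
    syr^[n - 1] (2 ^ n - 1) = 2 * 3 ^ (n - 1) - 1 := by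
  obtain ⟨m, rfl⟩ : ∃ m, n = m + 1 := ⟨n - 1, by omega⟩
  simpa [Nat.mul_comm] using syr_aux m 0
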